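/- Let M ≥ 6 be even and let u = 0 < v < w < M with v and w even. Then for every z ∈ F_2^M with Γ(z) ≠ 0, the sum Σ_{j odd, 0 ≤ j < M} z_j is even. -/

import Mathlib

open Finset

/-- The quadratic form on F_2^M associated with the cycle on vertices
{0, ..., M−1} with bits b_u, b_v, b_w at the distinguished vertices
u = 0, v, w: q(x) = 2·Σ_j x_j x_{j+1} + b_u x_u + b_v x_v + b_w x_w in Z_4. -/
def cycleForm (M : ℕ) [NeZero M] (v w : Fin M) (bu bv bw : ZMod 2)
    (x : Fin M → ZMod 2) : ZMod 4 :=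
  2 * ∑ j : Fin M, ((x j).val : ZMod 4) * ((x (j + 1)).val : ZMod 4)
    + (bu.val : ZMod 4) * ((x 0).val : ZMod 4)
    + (bv.val : ZMod 4) * ((x v).val : ZMod 4)
    + (bw.val : ZMod 4) * ((x w).val : ZMod 4)

/-- The Fourier coefficient Γ(z) = Σ_x (−1)^{z^T x} i^{q(x)}. -/
noncomputable def cycleGamma (M : ℕ) [NeZero M] (v w : Fin M)
    (bu bv bw : ZMod 2) (z : Fin M → ZMod 2) : ℂ :=
  ∑ x : Fin M → ZMod 2,
    (-1 : ℂ) ^ (∑ α : Fin M, z α * x α).val *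
      Complex.I ^ (cycleForm M v w bu bv bw x).val

/-!
Let `c` be the indicator of the odd vertices. As `M` is even, every edge of the cycle has exactly
one odd endpoint, so `Σ_j (x + c)_j (x + c)_{j+1} = Σ_j x_j x_{j+1}` in `ℤ/2`; as `u, v, w` are
even, `c` does not touch the linear terms. Hence `q(x + c) = q(x)`, and substituting `x ↦ x + c`
in `Γ(z)` multiplies it by `(-1)^{z·c}`, where `z·c` is the parity of `Σ_{j odd} z_j`. If that
parity is odd, `Γ(z) = -Γ(z) = 0`.
-/

theorem sum_neg_one_pow_dotProduct_mul_eq_zero {ι R : Type*} [Fintype ι] [DecidableEq ι]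
    [Ring R] [IsAddTorsionFree R] (z c : ι → ZMod 2) (f : (ι → ZMod 2) → R)
    (hf : ∀ x, f (x + c) = f x) (hzc : z ⬝ᵥ c = 1) :
    ∑ x, (-1 : R) ^ (z ⬝ᵥ x).val * f x = 0 := by
  have hsign : ∀ x, (-1 : R) ^ (z ⬝ᵥ (x + c)).val = -(-1) ^ (z ⬝ᵥ x).val := fun x => by
    rw [dotProduct_add, hzc, ZMod.val_add, ZMod.val_one, ← neg_one_pow_eq_pow_mod_two, pow_succ,
      mul_neg_one]
  refine self_eq_neg.mp ?_
  calc ∑ x, (-1 : R) ^ (z ⬝ᵥ x).val * f x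
      = ∑ x, (-1 : R) ^ (z ⬝ᵥ (x + c)).val * f (x + c) :=
        (Equiv.sum_comp (Equiv.addRight c) _).symm
    _ = -∑ x, (-1 : R) ^ (z ⬝ᵥ x).val * f x := by
        simp only [hsign, hf, neg_mul, Finset.sum_neg_distrib]

theorem sum_add_mul_add_of_alternating {n : ℕ} [NeZero n] (x c : Fin n → ZMod 2)
    (hc : ∀ j, c (j + 1) = c j + 1) :
    ∑ j, (x j + c j) * (x (j + 1) + c (j + 1)) = ∑ j, x j * x (j + 1) := by
  set h : Fin n → ZMod 2 := fun j => (c j + 1) * x j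
  -- the cross terms telescope around the cycle
  have hterm : ∀ j,
      (x j + c j) * (x (j + 1) + c (j + 1)) = x j * x (j + 1) + (h (j + 1) + h j) := by
    intro j
    simp only [h, hc]
    generalize x j = a, x (j + 1) = b, c j = d
    revert a b d; decide
  have hshift : ∑ j, h (j + 1) = ∑ j, h j :=
    Equiv.sum_comp (Equiv.addRight (1 : Fin n)) h
  rw [Finset.sum_congr rfl fun j _ => hterm j, Finset.sum_add_distrib, Finset.sum_add_distrib,
    hshift, CharTwo.add_self_eq_zero, add_zero]

def doubleVal : ZMod 2 →+ ZMod 4 where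
  toFun a := 2 * (a.val : ZMod 4)
  map_zero' := by decide
  map_add' := by decide

theorem two_mul_sum_val_mul_val {ι : Type*} [Fintype ι] (a b : ι → ZMod 2) :
    2 * ∑ i, ((a i).val : ZMod 4) * ((b i).val : ZMod 4) = doubleVal (∑ i, a i * b i) := by
  have hpair : ∀ a b : ZMod 2, 2 * ((a.val : ZMod 4) * (b.val : ZMod 4)) = doubleVal (a * b) := by
    decide
  rw [Finset.mul_sum, map_sum]
  exact Finset.sum_congr rfl fun i _ => hpair (a i) (b i)

theorem cycleForm_add_of_alternating (M : ℕ) [NeZero M] (v w : Fin M) (bu bv bw : ZMod 2)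
    (x c : Fin M → ZMod 2) (hc : ∀ j, c (j + 1) = c j + 1)
    (hc0 : c 0 = 0) (hcv : c v = 0) (hcw : c w = 0) :
    cycleForm M v w bu bv bw (x + c) = cycleForm M v w bu bv bw x := by
  simp only [cycleForm, two_mul_sum_val_mul_val, Pi.add_apply, hc0, hcv, hcw, add_zero,
    sum_add_mul_add_of_alternating x c hc]

theorem natCast_val_succ_of_even {n : ℕ} [NeZero n] (hn : Even n) (j : Fin n) :
    (((j + 1 : Fin n) : ℕ) : ZMod 2) = (j : ℕ) + 1 := by
  have h2 : 2 ∣ n := even_iff_two_dvd.mp hn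
  rw [Fin.val_add, ← Nat.cast_one (R := ZMod 2), ← Nat.cast_add,
    ZMod.natCast_eq_natCast_iff' _ _ 2, Nat.mod_mod_of_dvd _ h2, Nat.add_mod, Fin.val_one',
    Nat.mod_mod_of_dvd _ h2, ← Nat.add_mod]

theorem dotProduct_natCast_val (n : ℕ) (z : Fin n → ZMod 2) :
    z ⬝ᵥ (fun j => ((j : ℕ) : ZMod 2)) =
      ((∑ j ∈ Finset.univ.filter (fun j : Fin n => Odd j.val), (z j).val : ℕ) : ZMod 2) := by
  rw [Nat.cast_sum, Finset.sum_filter, dotProduct]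
  refine Finset.sum_congr rfl fun j _ => ?_
  rcases Nat.even_or_odd j.val with he | ho
  · simp [(ZMod.natCast_eq_zero_iff_even).mpr he, Nat.not_odd_iff_even.mpr he]
  · simp [(ZMod.natCast_eq_one_iff_odd).mpr ho, ho]

theorem odd_sum_even_of_Gamma_ne_zero_general (M : ℕ) [NeZero M]
    (hMeven : Even M) (v w : Fin M)
    (hve : Even v.val) (hwe : Even w.val)
    (bu bv bw : ZMod 2) (z : Fin M → ZMod 2)
    (hz : cycleGamma M v w bu bv bw z ≠ 0) :
    Even (∑ j ∈ Finset.univ.filter (fun j : Fin M => Odd j.val), (z j).val) := by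
  set c : Fin M → ZMod 2 := fun j => ((j : ℕ) : ZMod 2)
  have hc : ∀ j, c (j + 1) = c j + 1 := natCast_val_succ_of_even hMeven
  have hcv : c v = 0 := ZMod.natCast_eq_zero_iff_even.mpr hve
  have hcw : c w = 0 := ZMod.natCast_eq_zero_iff_even.mpr hwe
  by_contra hodd
  have hzc : z ⬝ᵥ c = 1 := by
    rw [dotProduct_natCast_val]
    exact ZMod.natCast_eq_one_iff_odd.mpr (Nat.not_even_iff_odd.mp hodd)
  refine hz (sum_neg_one_pow_dotProduct_mul_eq_zero z c _ (fun x => ?_) hzc)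
  rw [cycleForm_add_of_alternating M v w bu bv bw x c hc (by simp [c]) hcv hcw]

/-- Let M ≥ 6 be even and u = 0 < v < w < M with v, w even.
Then for every z with Γ(z) ≠ 0 the sum Σ_{j odd} z_j is even. -/
theorem odd_sum_even_of_Gamma_ne_zero (M : ℕ) [NeZero M]
    (hM6 : 6 ≤ M) (hMeven : Even M) (v w : Fin M)
    (hv0 : 0 < v.val) (hvw : v.val < w.val)
    (hve : Even v.val) (hwe : Even w.val)
    (bu bv bw : ZMod 2) (z : Fin M → ZMod 2)
    (hz : cycleGamma M v w bu bv bw z ≠ 0) :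
    Even (∑ j ∈ Finset.univ.filter (fun j : Fin M => Odd j.val), (z j).val) :=
  odd_sum_even_of_Gamma_ne_zero_general M hMeven v w hve hwe bu bv bw z hz
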